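/- Let c ≥ 3 be an integer, set p = 2/(c−1), and let a and t be integers with 1 ≤ a ≤ t. Then (2c/(c+1)) · a^p · ∑_{q=a}^{t−1} 1/S_p(q) ≥ c · (1 − (a/t)^p). -/

import Mathlib

/-!
For `0 < p ≤ 1` the power sums `S(q) = ∑_{i ≤ q} i^p` satisfy
`(p + 1) S(q) ((q + 1)^p - q^p) ≤ p q^p (q + 1)^p`, i.e.
`1 / S(q) ≥ (p + 1) / p · (q^(-p) - (q + 1)^(-p))`, so the sum over `a ≤ q < t` telescopes;
for `p = 2 / (c - 1)` the constant `(p + 1) / p` is `(c + 1) / 2`.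

The bound on `S(q)` goes by induction from `q = 0`: the step is `g(q + 1) - g(q) ≥ 1 / p` for
`g(y) = y^p / ((y + 1)^p - y^p)`, which follows from `g' ≥ 1 / p`. As
`g' = p (y (y + 1))^(p - 1) / ((y + 1)^p - y^p)^2`, this is the comparison
`(y + 1)^p - y^p ≤ p (y (y + 1))^((p - 1) / 2)` of a power difference with the geometric mean,
which in logarithmic coordinates reads `sinh (p d) ≤ p sinh d`: convexity of `sinh` on `[0, ∞)`.
-/

open Real Set Finset

lemma convexOn_sinh_Ici : ConvexOn ℝ (Ici 0) sinh := by
  refine MonotoneOn.convexOn_of_deriv (convex_Ici 0) continuous_sinh.continuousOn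
    differentiable_sinh.differentiableOn ?_
  rw [interior_Ici, Real.deriv_sinh]
  intro x hx y hy hxy
  exact cosh_le_cosh.2 (by rwa [abs_of_pos hx, abs_of_pos hy])

lemma sinh_mul_le_mul_sinh {t x : ℝ} (ht0 : 0 ≤ t) (ht1 : t ≤ 1) (hx : 0 ≤ x) :
    sinh (t * x) ≤ t * sinh x := by
  simpa using convexOn_sinh_Ici.2 hx (mem_Ici.2 le_rfl) ht0 (sub_nonneg.2 ht1) (add_sub_cancel t 1)

lemma exp_add_sub_exp_sub (m d : ℝ) : exp (m + d) - exp (m - d) = 2 * exp m * sinh d := by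
  rw [sinh_eq, exp_add, exp_sub, exp_neg]
  ring

lemma rpow_sub_rpow_le_mul_geom_mean {p x y : ℝ} (hp0 : 0 ≤ p) (hp1 : p ≤ 1) (hx : 0 < x)
    (hxy : x ≤ y) : y ^ p - x ^ p ≤ p * (x * y) ^ ((p - 1) / 2) * (y - x) := by
  have hy : 0 < y := hx.trans_le hxy
  set m := (log x + log y) / 2
  set d := (log y - log x) / 2
  have hd : 0 ≤ d := by have := log_le_log hx hxy; simp only [d]; linarith
  have hx' : x = exp (m - d) := by rw [show m - d = log x by ring, exp_log hx]
  have hy' : y = exp (m + d) := by rw [show m + d = log y by ring, exp_log hy]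
  have hxy' : x * y = exp (2 * m) := by rw [hx', hy', ← exp_add]; ring_nf
  rw [hxy', hx', hy', ← exp_mul, ← exp_mul, ← exp_mul, exp_add_sub_exp_sub,
    show (m + d) * p = m * p + p * d by ring, show (m - d) * p = m * p - p * d by ring,
    exp_add_sub_exp_sub]
  calc 2 * exp (m * p) * sinh (p * d) ≤ 2 * exp (m * p) * (p * sinh d) := by
        gcongr; exact sinh_mul_le_mul_sinh hp0 hp1 hd
    _ = p * exp (2 * m * ((p - 1) / 2)) * (2 * exp m * sinh d) := by
        rw [show m * p = 2 * m * ((p - 1) / 2) + m by ring, exp_add]; ring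

lemma rpow_add_one_sub_rpow_pos {p y : ℝ} (hp : 0 < p) (hy : 0 ≤ y) : 0 < (y + 1) ^ p - y ^ p :=
  sub_pos.2 (rpow_lt_rpow hy (lt_add_one y) hp)

lemma hasDerivAt_rpow_div_rpow_add_one_sub_rpow {p z : ℝ} (hp : 0 < p) (hz : 0 < z) :
    HasDerivAt (fun y : ℝ => y ^ p / ((y + 1) ^ p - y ^ p))
      (p * (z ^ (p - 1) * (z + 1) ^ (p - 1)) / ((z + 1) ^ p - z ^ p) ^ 2) z := by
  have d1 : HasDerivAt (fun y : ℝ => y ^ p) (p * z ^ (p - 1)) z :=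
    hasDerivAt_rpow_const (Or.inl hz.ne')
  have d2 : HasDerivAt (fun y : ℝ => (y + 1) ^ p) (p * (z + 1) ^ (p - 1)) z :=
    (hasDerivAt_rpow_const (Or.inl (by positivity : z + 1 ≠ 0))).comp_add_const z 1
  refine (d1.div (d2.sub d1) (rpow_add_one_sub_rpow_pos hp hz.le).ne').congr_deriv ?_
  rw [Pi.sub_apply]
  congr 1
  rw [show z ^ p = z ^ (p - 1) * z by rw [← rpow_add_one hz.ne']; ring_nf,
    show (z + 1) ^ p = (z + 1) ^ (p - 1) * (z + 1) by rw [← rpow_add_one (by positivity)]; ring_nf]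
  ring

lemma monotoneOn_rpow_div_rpow_add_one_sub_rpow_sub {p : ℝ} (hp0 : 0 < p) (hp1 : p ≤ 1) :
    MonotoneOn (fun y : ℝ => y ^ p / ((y + 1) ^ p - y ^ p) - y / p) (Ici 0) := by
  have hderiv : ∀ z : ℝ, 0 < z → HasDerivAt (fun y : ℝ => y ^ p / ((y + 1) ^ p - y ^ p) - y / p)
      (p * (z ^ (p - 1) * (z + 1) ^ (p - 1)) / ((z + 1) ^ p - z ^ p) ^ 2 - 1 / p) z := fun z hz =>
    (hasDerivAt_rpow_div_rpow_add_one_sub_rpow hp0 hz).sub ((hasDerivAt_id z).div_const p)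
  have hcont : ContinuousOn (fun y : ℝ => y ^ p / ((y + 1) ^ p - y ^ p) - y / p) (Ici 0) := by
    refine ContinuousOn.sub (ContinuousOn.div ?_ ?_ fun y hy => ?_) (by fun_prop)
    · exact continuousOn_id.rpow_const fun _ _ => Or.inr hp0.le
    · exact ((continuousOn_id.add continuousOn_const).rpow_const fun _ _ => Or.inr hp0.le).sub
        (continuousOn_id.rpow_const fun _ _ => Or.inr hp0.le)
    · exact (rpow_add_one_sub_rpow_pos hp0 hy).ne'
  refine monotoneOn_of_deriv_nonneg (convex_Ici 0) hcont ?_ ?_ <;> rw [interior_Ici]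
  · exact fun z hz => (hderiv z hz).differentiableAt.differentiableWithinAt
  intro z (hz : 0 < z)
  have hD := rpow_add_one_sub_rpow_pos hp0 hz.le
  rw [(hderiv z hz).deriv, sub_nonneg, div_le_div_iff₀ hp0 (pow_pos hD 2), one_mul]
  have hgap := rpow_sub_rpow_le_mul_geom_mean hp0.le hp1 hz (le_add_of_nonneg_right zero_le_one)
  rw [add_sub_cancel_left, mul_one] at hgap
  have hsq : ((z * (z + 1)) ^ ((p - 1) / 2)) ^ 2 = z ^ (p - 1) * (z + 1) ^ (p - 1) := by
    rw [← rpow_natCast, ← rpow_mul (by positivity), mul_rpow hz.le (by positivity)]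
    norm_num
  calc ((z + 1) ^ p - z ^ p) ^ 2 ≤ (p * (z * (z + 1)) ^ ((p - 1) / 2)) ^ 2 :=
        pow_le_pow_left₀ hD.le hgap 2
    _ = p * (z ^ (p - 1) * (z + 1) ^ (p - 1)) * p := by rw [mul_pow, hsq]; ring

lemma sum_Icc_rpow_mul_le {p : ℝ} (hp0 : 0 < p) (hp1 : p ≤ 1) (q : ℕ) :
    (∑ i ∈ Icc 1 q, (i : ℝ) ^ p) * ((p + 1) * (((q : ℝ) + 1) ^ p - (q : ℝ) ^ p)) ≤
      p * (q : ℝ) ^ p * ((q : ℝ) + 1) ^ p := by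
  induction q with
  | zero => simp [zero_rpow hp0.ne']
  | succ q ih =>
    rw [sum_Icc_succ_top (Nat.le_add_left 1 q), Nat.cast_succ]
    set u : ℝ := (q : ℝ)
    set S := ∑ i ∈ Icc 1 q, (i : ℝ) ^ p
    set Y := (u + 1) ^ p
    have hu : 0 ≤ u := Nat.cast_nonneg q
    have hD₀ := rpow_add_one_sub_rpow_pos hp0 hu
    have hD₁ := rpow_add_one_sub_rpow_pos hp0 (by positivity : 0 ≤ u + 1)
    have hstep : u ^ p / ((u + 1) ^ p - u ^ p) + 1 / p ≤ Y / ((u + 1 + 1) ^ p - Y) := by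
      have := monotoneOn_rpow_div_rpow_add_one_sub_rpow_sub hp0 hp1 (mem_Ici.2 hu)
        (mem_Ici.2 (by positivity)) (le_add_of_nonneg_right zero_le_one)
      simp only [add_div] at this
      linarith
    have hS : S * (p + 1) ≤ p * Y * (u ^ p / ((u + 1) ^ p - u ^ p)) := by
      rw [mul_div_assoc', le_div_iff₀ hD₀]; linarith
    have hS' : (S * (p + 1) + Y) * ((u + 1 + 1) ^ p - Y) ≤ p * Y * Y := by
      rw [← le_div_iff₀ hD₁]
      calc S * (p + 1) + Y ≤ p * Y * (Y / ((u + 1 + 1) ^ p - Y) - 1 / p) + Y :=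
            add_le_add_left (hS.trans (mul_le_mul_of_nonneg_left
              (le_sub_iff_add_le.2 hstep) (by positivity))) Y
        _ = p * Y * Y / ((u + 1 + 1) ^ p - Y) := by field_simp; ring
    linear_combination hS'

lemma sub_rpow_neg_le_one_div_sum_Icc_rpow {p : ℝ} (hp0 : 0 < p) (hp1 : p ≤ 1) {q : ℕ}
    (hq : 1 ≤ q) :
    (p + 1) / p * ((q : ℝ) ^ (-p) - ((q : ℝ) + 1) ^ (-p)) ≤ 1 / ∑ i ∈ Icc 1 q, (i : ℝ) ^ p := by
  have hu : (0 : ℝ) < q := by exact_mod_cast hq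
  have hS : 0 < ∑ i ∈ Icc 1 q, (i : ℝ) ^ p :=
    sum_pos (fun i hi => by have := (mem_Icc.1 hi).1; positivity) ⟨1, mem_Icc.2 ⟨le_rfl, hq⟩⟩
  rw [le_div_iff₀ hS, rpow_neg hu.le, rpow_neg (by positivity),
    show (p + 1) / p * (((q : ℝ) ^ p)⁻¹ - (((q : ℝ) + 1) ^ p)⁻¹) =
      (p + 1) * (((q : ℝ) + 1) ^ p - (q : ℝ) ^ p) / (p * (q : ℝ) ^ p * ((q : ℝ) + 1) ^ p) by
      field_simp,
    div_mul_eq_mul_div, div_le_one (by positivity), mul_comm]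
  exact sum_Icc_rpow_mul_le hp0 hp1 q

lemma rpow_neg_sub_rpow_neg_le_sum_Ico_one_div_sum_Icc_rpow {p : ℝ} (hp0 : 0 < p) (hp1 : p ≤ 1)
    {a t : ℕ} (ha : 1 ≤ a) (hat : a ≤ t) :
    (p + 1) / p * ((a : ℝ) ^ (-p) - (t : ℝ) ^ (-p)) ≤
      ∑ q ∈ Ico a t, 1 / ∑ i ∈ Icc 1 q, (i : ℝ) ^ p := by
  have htel : ∑ q ∈ Ico a t, ((q : ℝ) ^ (-p) - ((q : ℝ) + 1) ^ (-p)) =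
      (a : ℝ) ^ (-p) - (t : ℝ) ^ (-p) := by
    simpa only [Nat.cast_add, Nat.cast_one, sub_neg_eq_add, neg_add_eq_sub] using
      sum_Ico_sub (fun i : ℕ => -(i : ℝ) ^ (-p)) hat
  rw [← htel, mul_sum]
  exact sum_le_sum fun q hq => sub_rpow_neg_le_one_div_sum_Icc_rpow hp0 hp1
    (ha.trans (mem_Ico.1 hq).1)

/-- Telescoping bound on partial kernel sums: for integers `c ≥ 3`, `p = 2/(c−1)`,
and integers `1 ≤ a ≤ t`, `(2c/(c+1)) · a^p · ∑_{q=a}^{t−1} 1/S_p(q) ≥ c·(1 − (a/t)^p)`. -/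
theorem stmt_9 (c : ℕ) (hc : 3 ≤ c) (p : ℝ) (hp : p = 2 / ((c : ℝ) - 1))
    (a t : ℕ) (ha : 1 ≤ a) (hat : a ≤ t)
    (S : ℕ → ℝ) (hS : ∀ n : ℕ, S n = ∑ i ∈ Finset.Icc 1 n, (i : ℝ) ^ p) :
    (c : ℝ) * (1 - ((a : ℝ) / (t : ℝ)) ^ p) ≤
      (2 * (c : ℝ) / ((c : ℝ) + 1)) * (a : ℝ) ^ p * ∑ q ∈ Finset.Ico a t, 1 / S q := by
  have hc' : (3 : ℝ) ≤ c := by exact_mod_cast hc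
  have hp0 : 0 < p := by rw [hp]; exact div_pos two_pos (by linarith)
  have hp1 : p ≤ 1 := by rw [hp, div_le_one (by linarith)]; linarith
  have ha0 : (0 : ℝ) < a := by exact_mod_cast ha
  have ht0 : (0 : ℝ) < t := by exact_mod_cast ha.trans hat
  have hcoef : 2 * (c : ℝ) / (c + 1) * ((p + 1) / p) = c := by
    have hc1 : (c : ℝ) - 1 ≠ 0 := by linarith
    rw [hp]; field_simp; ring
  have hpow : (a : ℝ) ^ p * ((a : ℝ) ^ (-p) - (t : ℝ) ^ (-p)) = 1 - ((a : ℝ) / t) ^ p := by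
    rw [rpow_neg ha0.le, rpow_neg ht0.le, div_rpow ha0.le ht0.le]; field_simp
  calc (c : ℝ) * (1 - ((a : ℝ) / t) ^ p)
      = 2 * c / (c + 1) * ((p + 1) / p) * ((a : ℝ) ^ p * ((a : ℝ) ^ (-p) - (t : ℝ) ^ (-p))) := by
        rw [hcoef, hpow]
    _ = 2 * c / (c + 1) * (a : ℝ) ^ p * ((p + 1) / p * ((a : ℝ) ^ (-p) - (t : ℝ) ^ (-p))) := by
        ring
    _ ≤ 2 * c / (c + 1) * (a : ℝ) ^ p * ∑ q ∈ Ico a t, 1 / S q := by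
        simp only [hS]
        gcongr
        exact rpow_neg_sub_rpow_neg_le_sum_Ico_one_div_sum_Icc_rpow hp0 hp1 ha hat
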